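/- Let A > 1 be an integer and ĉ ∈ ℝ. Suppose that the uniform random variable on [A]^N given by α ↦ (2/N) ∑_{j=1}^N log(T^j ᾱ) converges in probability to ĉ, i.e., for every ε > 0, (1/A^N)·#{α ∈ [A]^N : |(2/N) ∑_{j=1}^N log(T^j ᾱ) − ĉ| > ε} → 0 as N → ∞. Then the random variable ℓ_g/ℓ_p on Π_A(N) with the uniform measure also converges in probability to ĉ: for every ε > 0, |{C ∈ Π_A(N) : |ℓ_g(C)/ℓ_p(C) − ĉ| > ε}| / π_A(N) → 0 as N → ∞ along even integers. -/

import Mathlib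

open Filter

namespace Winding

/-- Words of length `n` over the alphabet `{1,…,A}`; the `i`-th letter is `(α i).1 + 1`. -/
abbrev Word (A n : ℕ) : Type := Fin n → Fin A

/-- The `i`-th partial quotient `a_{i+1} ∈ {1,…,A}` of a word. -/
def letter {A n : ℕ} (α : Word A n) (i : Fin n) : ℕ := (α i).1 + 1

/-- `α` has period `d`: `d` is a positive divisor of `n` and `a_i = a_{i+d}` whenever in range. -/
def HasPeriod {A n : ℕ} (α : Word A n) (d : ℕ) : Prop :=
  0 < d ∧ d ∣ n ∧
    ∀ (i : ℕ) (h : i + d < n),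
      α ⟨i, Nat.lt_of_le_of_lt (Nat.le_add_right i d) h⟩ = α ⟨i + d, h⟩

/-- The minimal period of a word. -/
noncomputable def mp {A n : ℕ} (α : Word A n) : ℕ := sInf {d | HasPeriod α d}

/-- A word of even length `n` is primitive if `mp α = n`, or `n/2` is odd and `mp α = n/2`. -/
def Primitive {A n : ℕ} (α : Word A n) : Prop :=
  mp α = n ∨ (Odd (n / 2) ∧ mp α = n / 2)

/-- Cyclic shift of a word by `s` positions. -/
def shift {A n : ℕ} (s : ℕ) (α : Word A n) : Word A n :=
  fun i => α ⟨(i.1 + s) % n, Nat.mod_lt _ i.pos⟩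

/-- Even cyclic shift relation. -/
def ShiftRel (A n : ℕ) (α β : Word A n) : Prop :=
  ∃ s : ℕ, Even s ∧ β = shift s α

/-- Primitive words of length `n`. -/
def PrimWord (A n : ℕ) : Type := {α : Word A n // Primitive α}

instance {A n : ℕ} : Finite (PrimWord A n) := by unfold PrimWord; infer_instance

/-- `P_n`: equivalence classes of primitive words of length `n` under even cyclic shifts. -/
def GeodClass (A n : ℕ) : Type :=
  Quot (fun α β : PrimWord A n => ShiftRel A n α.1 β.1)

instance {A n : ℕ} : Finite (GeodClass A n) :=
  Finite.of_surjective _ (Quot.mk_surjective)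

instance (N : ℕ) : Finite {n : ℕ // n ≤ N ∧ Even n} :=
  Finite.of_injective (fun x => (⟨x.1, Nat.lt_succ_of_le x.2.1⟩ : Fin (N + 1)))
    fun x y h => Subtype.ext (by simpa using congrArg Fin.val h)

/-- `Π_A(N)`: the disjoint union of the `P_n` over even `n ≤ N`. -/
def Geod (A N : ℕ) : Type := Σ n : {n : ℕ // n ≤ N ∧ Even n}, GeodClass A n.1

instance {A N : ℕ} : Finite (Geod A N) := by unfold Geod; infer_instance

/-- `π_A(N) = |Π_A(N)|`. -/
noncomputable def piA (A N : ℕ) : ℕ := Nat.card (Geod A N)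

/-- The winding number `Ψ(α) = a_1 - a_2 + a_3 - ⋯ - a_n`. -/
def winding {A n : ℕ} (α : Word A n) : ℤ :=
  ∑ i : Fin n, (-1) ^ (i : ℕ) * (letter α i : ℤ)

/-- Winding number of a closed geodesic (well defined on classes since `Ψ` is invariant
under even cyclic shifts; here computed on a choice of representative). -/
noncomputable def windingG {A N : ℕ} (C : Geod A N) : ℤ := winding C.2.out.1

/-- Period length `ℓ_p` of a closed geodesic. -/
def plenG {A N : ℕ} (C : Geod A N) : ℕ := C.1.1

/-- Word length `ℓ_w(α) = 2 ∑ a_i`. -/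
def wlen {A n : ℕ} (α : Word A n) : ℕ := 2 * ∑ i : Fin n, letter α i

/-- Word length of a closed geodesic. -/
noncomputable def wlenG {A N : ℕ} (C : Geod A N) : ℕ := wlen C.2.out.1

/-- Value of a finite continued fraction `b_1 + 1/(b_2 + 1/(⋯ + 1/b_k))`. -/
noncomputable def cfVal : List ℕ → ℝ
  | [] => 0
  | b :: l => b + 1 / cfVal l

/-- The block `l` repeated `m` times. -/
def repBlock (l : List ℕ) : ℕ → List ℕ
  | 0 => []
  | m + 1 => l ++ repBlock l m

/-- Value of the purely periodic continued fraction with repeating block `l`: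
the limit of the values of the finite continued fractions obtained by repeating `l`. -/
noncomputable def periodicVal (l : List ℕ) : ℝ :=
  limUnder atTop fun m => cfVal (repBlock l m)

/-- The list of partial quotients of a word. -/
def toList {A n : ℕ} (α : Word A n) : List ℕ := List.ofFn (letter α)

/-- `T^j ᾱ`: the purely periodic continued fraction whose repeating block is the
cyclic shift of `α` by `j`. -/
noncomputable def Tpow {A n : ℕ} (α : Word A n) (j : ℕ) : ℝ :=
  periodicVal (toList (shift j α))

/-- Geometric length `ℓ_g(α) = 2 ∑_{j=1}^n log (T^j ᾱ)`. -/
noncomputable def glen {A n : ℕ} (α : Word A n) : ℝ :=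
  2 * ∑ j : Fin n, Real.log (Tpow α (j.1 + 1))

/-- Geometric length of a closed geodesic. -/
noncomputable def glenG {A N : ℕ} (C : Geod A N) : ℝ := glen C.2.out.1



/-!
Every class in `P_n` (`n` even) consists of exactly `n/2` primitive words, its even cyclic
shifts, and `ℓ_g` is shift-invariant; so there are at most `(2/n)·#{bad words of length n}`
bad classes of period length `n`, which is `o(A^n/n)` by hypothesis. Since the weights `A^n/n`
grow geometrically, summing over even `n ≤ 2k` keeps the bound `o(A^{2k}/k)`. On the other hand
all but `O(k A^k)` words of length `2k` are primitive, so `π_A(2k) ≥ #P_{2k} ≳ A^{2k}/(2k)`.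
-/

open Asymptotics Finset

theorem sum_range_succ_pow_div_le {b : ℝ} (hb : 1 < b) (N : ℕ) :
    ∑ n ∈ range (N + 1), b ^ n / (n + 1) ≤ 1 / (1 - b⁻¹) ^ 2 * (b ^ N / (N + 1)) := by
  set r := b⁻¹
  have hr0 : 0 ≤ r := by positivity
  have hsum : HasSum (fun m : ℕ => ((m : ℝ) + 1) * r ^ m) (1 / (1 - r) ^ 2) := by
    simpa only [Nat.choose_one_right, Nat.cast_add_one] using
      hasSum_choose_mul_geometric_of_norm_lt_one 1
        (by rwa [Real.norm_of_nonneg hr0, inv_lt_one₀ (by linarith)])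
  have hterm : ∀ n ∈ range (N + 1),
      b ^ n / (n + 1) ≤ b ^ N / (N + 1) * (((N - n : ℕ) + 1) * r ^ (N - n)) := by
    intro n hn
    have hnN : n ≤ N := Nat.lt_succ_iff.mp (mem_range.mp hn)
    have hpow : b ^ n = b ^ N * r ^ (N - n) := by
      rw [inv_pow, ← div_eq_mul_inv, eq_div_iff (by positivity), ← pow_add,
        Nat.add_sub_cancel' hnN]
    have hweight : (N + 1 : ℝ) ≤ ((N - n : ℕ) + 1) * (n + 1) := by
      push_cast [Nat.cast_sub hnN]
      nlinarith [(Nat.cast_le (α := ℝ)).mpr hnN, (n.cast_nonneg : (0 : ℝ) ≤ n)]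
    rw [hpow, div_le_iff₀ (by positivity)]
    calc b ^ N * r ^ (N - n) = b ^ N / (N + 1) * r ^ (N - n) * (N + 1) := by field_simp
      _ ≤ b ^ N / (N + 1) * r ^ (N - n) * (((N - n : ℕ) + 1) * (n + 1)) := by gcongr
      _ = _ := by ring
  calc ∑ n ∈ range (N + 1), b ^ n / (n + 1)
      ≤ ∑ n ∈ range (N + 1), b ^ N / (N + 1) * (((N - n : ℕ) + 1) * r ^ (N - n)) :=
        sum_le_sum hterm
    _ = b ^ N / (N + 1) * ∑ m ∈ range (N + 1), ((m : ℝ) + 1) * r ^ m := by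
        rw [mul_sum, ← sum_range_reflect]
        refine sum_congr rfl fun n hn => ?_
        have hnN : n ≤ N := Nat.lt_succ_iff.mp (mem_range.mp hn)
        rw [show N + 1 - 1 - n = N - n by omega, Nat.sub_sub_self hnN]
    _ ≤ b ^ N / (N + 1) * (1 / (1 - r) ^ 2) := by
        gcongr
        exact sum_le_hasSum _ (fun m _ => by positivity) hsum
    _ = _ := mul_comm _ _

theorem _root_.Asymptotics.IsLittleO.sum_range_succ_pow_div {b : ℝ} (hb : 1 < b) {u : ℕ → ℝ}
    (hu : u =o[atTop] fun n => b ^ n / (n + 1)) :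
    (fun N => ∑ n ∈ range (N + 1), u n) =o[atTop] fun N => b ^ N / (N + 1) := by
  have hg : 0 ≤ fun n : ℕ => b ^ n / (n + 1) := fun n => by
    have : 0 < b := by linarith
    dsimp; positivity
  have hdiv : Tendsto (fun N => ∑ n ∈ range N, b ^ n / (n + 1)) atTop atTop := by
    refine tendsto_atTop_mono (fun N => sum_le_sum fun n _ => ?_)
      Real.tendsto_sum_range_one_div_nat_succ_atTop
    gcongr
    exact one_le_pow₀ hb.le
  refine ((hu.sum_range hg hdiv).comp_tendsto (tendsto_add_atTop_nat 1)).trans_isBigO ?_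
  refine IsBigO.of_bound (1 / (1 - b⁻¹) ^ 2) (Eventually.of_forall fun N => ?_)
  dsimp only [Function.comp_def]
  rw [Real.norm_of_nonneg (sum_nonneg fun n _ => hg n), Real.norm_of_nonneg (hg N)]
  exact sum_range_succ_pow_div_le hb N

section Shift

variable {A n : ℕ}

theorem shift_shift (s t : ℕ) (α : Word A n) : shift s (shift t α) = shift (s + t) α := by
  funext i
  simp only [shift, Nat.mod_add_mod, add_assoc, add_comm s t]

theorem shift_mod (s : ℕ) (α : Word A n) : shift (s % n) α = shift s α := by
  funext i
  simp only [shift, Nat.add_mod_mod]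

theorem shift_zero (α : Word A n) : shift 0 α = α := by
  funext i
  simp only [shift, add_zero, Nat.mod_eq_of_lt i.2]

theorem shift_length_mul (t : ℕ) (α : Word A n) : shift (n * t) α = α := by
  rw [← shift_mod, Nat.mul_mod_right, shift_zero]

theorem shift_mul_pred_shift (s : ℕ) (α : Word A n) : shift (s * (n - 1)) (shift s α) = α := by
  rcases Nat.eq_zero_or_pos n with rfl | hn
  · exact Subsingleton.elim _ _
  · rw [shift_shift, ← Nat.mul_add_one, Nat.sub_add_cancel hn, mul_comm, shift_length_mul]

theorem shift_injective (s : ℕ) : Function.Injective (shift s : Word A n → Word A n) :=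
  Function.LeftInverse.injective (g := shift (s * (n - 1))) (shift_mul_pred_shift s)

theorem shift_sub_eq_self {α : Word A n} {s t : ℕ} (hst : s ≤ t)
    (h : shift s α = shift t α) : shift (t - s) α = α :=
  shift_injective s (by rw [shift_shift, Nat.add_sub_cancel' hst, h])

theorem shift_mul_eq_self {α : Word A n} {s : ℕ} (h : shift s α = α) (m : ℕ) :
    shift (s * m) α = α := by
  induction m with
  | zero => exact shift_zero α
  | succ m ih => rw [Nat.mul_succ, ← shift_shift, h, ih]

end Shift

section Period

variable {A n : ℕ} {α : Word A n}

theorem hasPeriod_of_shift_eq_self {d : ℕ} (hd : 0 < d) (hdn : d ∣ n) (h : shift d α = α) :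
    HasPeriod α d :=
  ⟨hd, hdn, fun i hi => by
    rw [← congrFun h ⟨i, _⟩]
    simp only [shift, Nat.mod_eq_of_lt hi]⟩

theorem hasPeriod_gcd_of_shift_eq_self {s : ℕ} (hs : 0 < s) (hsn : s < n) (h : shift s α = α) :
    HasPeriod α (Nat.gcd s n) := by
  obtain ⟨m, -, hm⟩ := Nat.exists_mul_mod_eq_gcd ((Nat.gcd_le_left n hs).trans_lt hsn)
  refine hasPeriod_of_shift_eq_self (Nat.gcd_pos_of_pos_left n hs) (Nat.gcd_dvd_right s n) ?_
  rw [← hm, shift_mod]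
  exact shift_mul_eq_self h m

theorem HasPeriod.apply_eq_apply_mod {d : ℕ} (h : HasPeriod α d) (i : ℕ) (hi : i < n) :
    α ⟨i, hi⟩ = α ⟨i % d, (Nat.mod_le i d).trans_lt hi⟩ := by
  induction i using Nat.strong_induction_on with
  | _ i ih =>
    rcases lt_or_ge i d with hid | hid
    · simp only [Nat.mod_eq_of_lt hid]
    · obtain ⟨j, rfl⟩ := Nat.exists_eq_add_of_le' hid
      rw [← h.2.2 j hi, ih j (by have := h.1; omega)]
      simp only [Nat.add_mod_right]

theorem mp_le {d : ℕ} (h : HasPeriod α d) : mp α ≤ d := Nat.sInf_le h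

theorem hasPeriod_length (hn : 0 < n) (α : Word A n) : HasPeriod α n :=
  ⟨hn, dvd_rfl, fun i h => absurd h (by omega)⟩

theorem hasPeriod_mp (hn : 0 < n) (α : Word A n) : HasPeriod α (mp α) :=
  Nat.sInf_mem (s := {d | HasPeriod α d}) ⟨n, hasPeriod_length hn α⟩

theorem le_half_of_dvd_of_lt {d : ℕ} (hdn : d ∣ n) (h : d < n) : d ≤ n / 2 := by
  obtain ⟨c, rfl⟩ := hdn
  rcases c with _ | _ | c
  · omega
  · omega
  · rw [Nat.le_div_iff_mul_le two_pos]; nlinarith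

theorem Primitive.eq_half_of_hasPeriod (hα : Primitive α) {d : ℕ} (hd : HasPeriod α d)
    (hdn : d < n) : Odd (n / 2) ∧ d = n / 2 := by
  have hmp_le := mp_le hd
  have hd_le := le_half_of_dvd_of_lt hd.2.1 hdn
  rcases hα with hmp | ⟨hodd, hmp⟩
  · omega
  · exact ⟨hodd, by omega⟩

theorem mp_le_half_of_not_primitive (hn : 0 < n) (hα : ¬Primitive α) : mp α ≤ n / 2 :=
  le_half_of_dvd_of_lt (hasPeriod_mp hn α).2.1 <|
    (mp_le (hasPeriod_length hn α)).lt_of_ne fun h => hα (Or.inl h)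

end Period

section GeometricLength

variable {A n : ℕ}

theorem Tpow_mod (α : Word A n) (j : ℕ) : Tpow α (j % n) = Tpow α j := by
  simp only [Tpow, shift_mod]

theorem Tpow_shift (s j : ℕ) (α : Word A n) : Tpow (shift s α) j = Tpow α (j + s) := by
  simp only [Tpow, shift_shift]

theorem sum_log_Tpow_add (α : Word A n) (t : ℕ) :
    ∑ j : Fin n, Real.log (Tpow α (j + t)) = ∑ j : Fin n, Real.log (Tpow α j) := by
  rcases n with _ | n
  · simp
  · refine Fintype.sum_equiv (Equiv.addRight ⟨t % (n + 1), Nat.mod_lt _ n.succ_pos⟩) _ _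
      fun j => ?_
    rw [Equiv.coe_addRight, Fin.val_add, Nat.add_mod_mod, Tpow_mod]

theorem glen_div_eq (α : Word A n) :
    glen α / n = 2 / (n : ℝ) * ∑ j : Fin n, Real.log (Tpow α (j.1 + 1)) := by
  rw [glen, div_mul_eq_mul_div]

theorem glen_shift (s : ℕ) (α : Word A n) : glen (shift s α) = glen α := by
  simp only [glen, Tpow_shift, add_assoc, sum_log_Tpow_add]

end GeometricLength

section Classes

variable {A n : ℕ}

theorem shiftRel_equivalence : Equivalence (ShiftRel A n) where
  refl α := ⟨0, Even.zero, (shift_zero α).symm⟩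
  symm := by
    rintro α _ ⟨s, hs, rfl⟩
    exact ⟨s * (n - 1), hs.mul_right _, (shift_mul_pred_shift s α).symm⟩
  trans := by
    rintro α _ _ ⟨s, hs, rfl⟩ ⟨t, ht, rfl⟩
    exact ⟨t + s, ht.add hs, shift_shift t s α⟩

theorem shiftRel_of_mk_eq_mk {v w : PrimWord A n}
    (h : (Quot.mk _ v : GeodClass A n) = Quot.mk _ w) : ShiftRel A n v.1 w.1 :=
  (shiftRel_equivalence.comap Subtype.val).eqvGen_iff.mp (Quot.eqvGen_exact h)

end Classes

section EvenShift

variable {A k : ℕ}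

theorem Primitive.shift_two_mul_inj {α : Word A (2 * k)} (hα : Primitive α) {i j : ℕ}
    (hi : i < k) (hj : j < k) (h : shift (2 * i) α = shift (2 * j) α) : i = j := by
  wlog hij : i ≤ j generalizing i j
  · exact (this hj hi h.symm (by omega)).symm
  by_contra hne
  have hper := hasPeriod_gcd_of_shift_eq_self (s := 2 * j - 2 * i) (by omega) (by omega)
    (shift_sub_eq_self (by omega) h)
  obtain ⟨hodd, hhalf⟩ := hα.eq_half_of_hasPeriod hper
    ((Nat.gcd_le_left _ (by omega)).trans_lt (by omega))
  have htwo : 2 ∣ Nat.gcd (2 * j - 2 * i) (2 * k) :=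
    Nat.dvd_gcd ⟨j - i, by omega⟩ ⟨k, rfl⟩
  rw [hhalf, Nat.mul_div_cancel_left k two_pos] at htwo
  rw [Nat.mul_div_cancel_left k two_pos] at hodd
  exact Nat.not_even_iff_odd.mpr hodd (even_iff_two_dvd.mpr htwo)

noncomputable def evenShift (p : GeodClass A (2 * k) × Fin k) : Word A (2 * k) :=
  shift (2 * (p.2 : ℕ)) p.1.out.1

theorem evenShift_injective : Function.Injective (evenShift (A := A) (k := k)) := by
  rintro ⟨q, i⟩ ⟨q', j⟩ h
  obtain rfl : q = q' := by
    rw [← Quot.out_eq q, ← Quot.out_eq q']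
    refine Quot.sound ⟨2 * (j : ℕ) * (2 * k - 1) + 2 * (i : ℕ), ?_, ?_⟩
    · exact ((even_two_mul (j : ℕ)).mul_right _).add (even_two_mul (i : ℕ))
    · rw [← shift_shift]
      exact ((congrArg (shift _) h).trans (shift_mul_pred_shift _ _)).symm
  exact Prod.ext rfl (Fin.ext (q.out.2.shift_two_mul_inj i.2 j.2 h))

theorem exists_evenShift_eq (hk : 0 < k) (w : PrimWord A (2 * k)) :
    ∃ i : Fin k, evenShift (Quot.mk _ w, i) = w.1 := by
  obtain ⟨s, hs, hw⟩ := shiftRel_of_mk_eq_mk (Quot.out_eq (Quot.mk _ w : GeodClass A (2 * k)))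
  have hpar : s % (2 * k) % 2 = s % 2 := Nat.mod_mod_of_dvd s (dvd_mul_right 2 k)
  have hlt := Nat.mod_lt s (show 0 < 2 * k by omega)
  rw [Nat.even_iff] at hs
  refine ⟨⟨s % (2 * k) / 2, by omega⟩, ?_⟩
  rw [hw, evenShift, ← shift_mod s]
  congr 1
  show 2 * (s % (2 * k) / 2) = s % (2 * k)
  omega

theorem card_primWord_le (hk : 0 < k) :
    Nat.card (PrimWord A (2 * k)) ≤ Nat.card (GeodClass A (2 * k)) * k := by
  choose i hi using exists_evenShift_eq (A := A) hk
  have hinj : Function.Injective fun w => ((Quot.mk _ w : GeodClass A (2 * k)), i w) :=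
    fun w w' h => Subtype.ext (by rw [← hi w, ← hi w']; exact congrArg evenShift h)
  simpa only [Nat.card_prod, Nat.card_fin] using
    Nat.card_le_card_of_injective (β := GeodClass A (2 * k) × Fin k) _ hinj

end EvenShift

section Counting

abbrev BadWord (A n : ℕ) (ε c : ℝ) : Type :=
  {α : Word A n // ε < |2 / (n : ℝ) * ∑ j : Fin n, Real.log (Tpow α (j.1 + 1)) - c|}

-- The condition `Even n` mirrors `Π_A(N)`, which only contains classes of even period length.
abbrev BadClass (A n : ℕ) (ε c : ℝ) : Type :=
  {q : GeodClass A n // Even n ∧ ε < |glen q.out.1 / (n : ℝ) - c|}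

variable {A : ℕ} {ε c : ℝ}

theorem card_badClass_two_mul_le (k : ℕ) :
    Nat.card (BadClass A (2 * k) ε c) * k ≤ Nat.card (BadWord A (2 * k) ε c) := by
  have hbad (p : BadClass A (2 * k) ε c × Fin k) : ε < |2 / ((2 * k : ℕ) : ℝ) *
      ∑ j : Fin (2 * k), Real.log (Tpow (evenShift (p.1.1, p.2)) (j.1 + 1)) - c| := by
    rw [← glen_div_eq, evenShift, glen_shift]
    exact p.1.2.2
  have hinj : Function.Injective fun p : BadClass A (2 * k) ε c × Fin k =>
      (⟨evenShift (p.1.1, p.2), hbad p⟩ : BadWord A (2 * k) ε c) := by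
    intro p p' h
    have := evenShift_injective (congrArg Subtype.val h)
    simp only [Prod.mk.injEq] at this
    exact Prod.ext (Subtype.ext this.1) this.2
  simpa only [Nat.card_prod, Nat.card_fin] using Nat.card_le_card_of_injective _ hinj

theorem card_badClass_mul_le (n : ℕ) :
    n * Nat.card (BadClass A n ε c) ≤ 2 * Nat.card (BadWord A n ε c) := by
  rcases Nat.even_or_odd n with hn | hn
  · obtain ⟨k, rfl⟩ := even_iff_two_dvd.mp hn
    rw [mul_assoc, mul_comm k]
    exact Nat.mul_le_mul_left 2 (card_badClass_two_mul_le k)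
  · have : IsEmpty (BadClass A n ε c) := ⟨fun q => Nat.not_even_iff_odd.mpr hn q.2.1⟩
    simp

theorem card_badGeod_le (N : ℕ) :
    Nat.card {C : Geod A N // ε < |glenG C / (plenG C : ℝ) - c|} ≤
      ∑ n ∈ range (N + 1), Nat.card (BadClass A n ε c) := by
  let f (C : {C : Geod A N // ε < |glenG C / (plenG C : ℝ) - c|}) :
      Σ n : Fin (N + 1), BadClass A n ε c :=
    ⟨⟨C.1.1.1, Nat.lt_succ_of_le C.1.1.2.1⟩, C.1.2, C.1.1.2.2, C.2⟩
  have hf : Function.Injective f := by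
    rintro ⟨⟨⟨n, hn⟩, q⟩, hq⟩ ⟨⟨⟨n', hn'⟩, q'⟩, hq'⟩ h
    simp only [f, Sigma.mk.inj_iff, Fin.mk.injEq] at h
    obtain ⟨rfl, h⟩ := h
    simp only [heq_iff_eq, Subtype.mk.injEq] at h
    subst h
    rfl
  calc _ ≤ Nat.card (Σ n : Fin (N + 1), BadClass A n ε c) := Nat.card_le_card_of_injective f hf
    _ = _ := by
      rw [Nat.card_sigma, Fin.sum_univ_eq_sum_range (fun n => Nat.card (BadClass A n ε c))]

theorem card_badClass_isLittleO (hA : 0 < A)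
    (h : Tendsto (fun n => (Nat.card (BadWord A n ε c) : ℝ) / (A : ℝ) ^ n) atTop (nhds 0)) :
    (fun n => (Nat.card (BadClass A n ε c) : ℝ)) =o[atTop] fun n => (A : ℝ) ^ n / (n + 1) := by
  rw [isLittleO_iff_tendsto' (Eventually.of_forall fun n hn => absurd hn (by positivity))]
  refine squeeze_zero' (Eventually.of_forall fun n => by positivity) ?_
    (by simpa only [mul_zero] using h.const_mul 4)
  filter_upwards [eventually_ge_atTop 1] with n hn
  have hcard : (n : ℝ) * Nat.card (BadClass A n ε c) ≤ 2 * Nat.card (BadWord A n ε c) := by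
    exact_mod_cast card_badClass_mul_le n
  have hn' : (1 : ℝ) ≤ n := by exact_mod_cast hn
  rw [div_div_eq_mul_div, ← mul_div_assoc, div_le_div_iff_of_pos_right (by positivity)]
  nlinarith [(Nat.card (BadClass A n ε c)).cast_nonneg (α := ℝ)]

end Counting

section GeodesicCount

variable {A : ℕ}

theorem card_not_primitive_le {n : ℕ} (hn : 0 < n) :
    Nat.card {α : Word A n // ¬Primitive α} ≤ (n / 2 + 1) * A ^ (n / 2) := by
  let f (α : {α : Word A n // ¬Primitive α}) : Fin (n / 2 + 1) × Word A (n / 2) :=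
    (⟨mp α.1, Nat.lt_succ_of_le (mp_le_half_of_not_primitive hn α.2)⟩,
      fun j => α.1 ⟨j, by omega⟩)
  have hf : Function.Injective f := by
    rintro ⟨α, hα⟩ ⟨β, hβ⟩ h
    simp only [f, Prod.mk.injEq, Fin.mk.injEq] at h
    obtain ⟨hmp, hprefix⟩ := h
    refine Subtype.ext (funext fun ⟨i, hi⟩ => ?_)
    show α ⟨i, hi⟩ = β ⟨i, hi⟩
    have hlt : i % mp α < n / 2 :=
      (Nat.mod_lt _ (hasPeriod_mp hn α).1).trans_le (mp_le_half_of_not_primitive hn hα)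
    rw [(hasPeriod_mp hn α).apply_eq_apply_mod i hi, (hasPeriod_mp hn β).apply_eq_apply_mod i hi]
    simp only [← hmp]
    exact congrFun hprefix ⟨i % mp α, hlt⟩
  simpa [Nat.card_prod] using Nat.card_le_card_of_injective f hf

theorem card_geodClass_le_piA {N : ℕ} (hN : Even N) : Nat.card (GeodClass A N) ≤ piA A N :=
  Nat.card_le_card_of_injective
    (Sigma.mk (β := fun n : {n : ℕ // n ≤ N ∧ Even n} => GeodClass A n.1)
      ⟨N, le_rfl, hN⟩)
    sigma_mk_injective

theorem pow_le_piA_mul_add {k : ℕ} (hk : 0 < k) :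
    A ^ (2 * k) ≤ piA A (2 * k) * k + (k + 1) * A ^ k := by
  have hsplit : Nat.card (PrimWord A (2 * k)) + Nat.card {α : Word A (2 * k) // ¬Primitive α} =
      A ^ (2 * k) := by
    classical
    rw [← Nat.card_sum]
    exact (Nat.card_congr (Equiv.sumCompl _)).trans (by simp)
  have hprim := card_primWord_le (A := A) hk
  have hnot := card_not_primitive_le (A := A) (n := 2 * k) (by omega)
  rw [Nat.mul_div_cancel_left k two_pos] at hnot
  have hgeod := Nat.mul_le_mul_right k (card_geodClass_le_piA (A := A) (even_two_mul k))
  omega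

theorem two_mul_succ_le_pow {k : ℕ} (hA : 2 ≤ A) (hk : 3 ≤ k) : 2 * (k + 1) ≤ A ^ k :=
  calc 2 * (k + 1) ≤ 4 * 2 ^ (k - 2) := by have := Nat.lt_two_pow_self (n := k - 2); omega
    _ = 2 ^ (2 + (k - 2)) := by rw [pow_add]; norm_num
    _ = 2 ^ k := by rw [Nat.add_sub_cancel' (by omega)]
    _ ≤ A ^ k := Nat.pow_le_pow_left hA k

theorem pow_le_two_mul_piA {k : ℕ} (hA : 2 ≤ A) (hk : 3 ≤ k) :
    A ^ (2 * k) ≤ 2 * k * piA A (2 * k) := by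
  have hpow : 2 * ((k + 1) * A ^ k) ≤ A ^ (2 * k) := by
    rw [two_mul k, pow_add, ← mul_assoc]
    exact Nat.mul_le_mul_right _ (two_mul_succ_le_pow hA hk)
  have := pow_le_piA_mul_add (A := A) (by omega : 0 < k)
  nlinarith

theorem pow_div_isBigO_piA (hA : 2 ≤ A) :
    (fun k : ℕ => (A : ℝ) ^ (2 * k) / (((2 * k : ℕ) : ℝ) + 1)) =O[atTop]
      fun k => (piA A (2 * k) : ℝ) := by
  refine IsBigO.of_bound 1 ?_
  filter_upwards [eventually_ge_atTop 3] with k hk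
  have hle : ((A ^ (2 * k) : ℕ) : ℝ) ≤ ((2 * k * piA A (2 * k) : ℕ) : ℝ) :=
    Nat.cast_le.mpr (pow_le_two_mul_piA hA hk)
  push_cast at hle
  rw [one_mul, Real.norm_of_nonneg (by positivity), Real.norm_of_nonneg (by positivity),
    div_le_iff₀ (by positivity)]
  push_cast
  nlinarith [(piA A (2 * k)).cast_nonneg (α := ℝ)]

end GeodesicCount

theorem stmt19 (A : ℕ) (hA : 1 < A) (c : ℝ)
    (h : ∀ ε : ℝ, 0 < ε →
      Tendsto
        (fun N : ℕ =>
          (Nat.card {α : Word A N //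
              ε < |2 / (N : ℝ) * ∑ j : Fin N, Real.log (Tpow α (j.1 + 1)) - c|} : ℝ) /
            (A : ℝ) ^ N)
        atTop (nhds 0)) :
    ∀ ε : ℝ, 0 < ε →
      Tendsto
        (fun k : ℕ =>
          (Nat.card {C : Geod A (2 * k) //
              ε < |glenG C / (plenG C : ℝ) - c|} : ℝ) /
            (piA A (2 * k) : ℝ))
        atTop (nhds 0) := by
  intro ε hε
  have hclasses := card_badClass_isLittleO (by omega) (h ε hε)
  have hsum := (hclasses.sum_range_succ_pow_div (by exact_mod_cast hA)).comp_tendsto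
    (tendsto_atTop_mono (fun k => Nat.le_mul_of_pos_left k two_pos) tendsto_id)
  refine IsLittleO.tendsto_div_nhds_zero ?_
  refine (IsBigO.of_bound 1 (Eventually.of_forall fun k => ?_)).trans_isLittleO
    (hsum.trans_isBigO (pow_div_isBigO_piA hA))
  simp only [Function.comp_apply, one_mul, Real.norm_natCast]
  exact_mod_cast card_badGeod_le (A := A) (ε := ε) (c := c) (2 * k)

end Winding
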